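/- Let ε ≥ 0 and C > 0, and let d^D be a probability measure on S × A. For a non-stationary policy π̃, let d_{π̃,i} denote the law of (s_i, a_i) along its trajectory and d_{π̃} = (1−γ)·∑_{i≥0} γ^i d_{π̃,i}. Suppose that for every non-stationary policy π̃ with J* − J_{π̃} ≤ ε and every i ∈ ℕ, d_{π̃,i} ≤ C·d^D. Let (Θ, λ) be a probability space and (π^θ)_{θ∈Θ} a family of non-stationary policies, each satisfying J* − J_{π^θ} ≤ ε, such that θ ↦ d_{π^θ}(B) is measurable for every measurable B ⊆ S × A, and define the mixture d_c(B) = ∫_Θ d_{π^θ}(B) dλ(θ). Then d_{d_c, π*_e} ≤ C·d^D. -/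

import Mathlib

open MeasureTheory ProbabilityTheory Filter Set

noncomputable section

variable {S A : Type*} [MeasurableSpace S] [MeasurableSpace A]

/-- One transition step of the MDP at the level of state-action laws:
from `(s,a) ~ ρ`, draw `s' ~ P(·|s,a)` and `a' ~ κ(·|s')`. -/
def mdpStep (P : Kernel (S × A) S) (κ : Kernel S A) (ρ : Measure (S × A)) :
    Measure (S × A) :=
  ρ.bind fun sa => (P sa).bind fun s' => (κ s').map fun a' => (s', a')

/-- Initial state-action law: `s ~ μ`, `a ~ κ(·|s)`. -/
def mdpInit (κ : Kernel S A) (μ : Measure S) : Measure (S × A) :=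
  μ.bind fun s => (κ s).map fun a => (s, a)

/-- Law of `(s_i, a_i)` for the (possibly non-stationary) policy `π` started at `μ0`. -/
def saLaw (P : Kernel (S × A) S) (π : ℕ → Kernel S A) (μ0 : Measure S) :
    ℕ → Measure (S × A)
  | 0 => mdpInit (π 0) μ0
  | i + 1 => mdpStep P (π (i + 1)) (saLaw P π μ0 i)

/-- Expected discounted return `J_π`. -/
def retJ (P : Kernel (S × A) S) (π : ℕ → Kernel S A) (μ0 : Measure S) (γ : ℝ)
    (R : S × A → ℝ) : ℝ :=
  ∑' i : ℕ, γ ^ i * ∫ sa, R sa ∂(saLaw P π μ0 i)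

/-- Law of `(s_i, a_i)` started from a state-action measure `ρ` at step 0. -/
def saLawFrom (P : Kernel (S × A) S) (π : ℕ → Kernel S A) (ρ : Measure (S × A)) :
    ℕ → Measure (S × A)
  | 0 => ρ
  | i + 1 => mdpStep P (π (i + 1)) (saLawFrom P π ρ i)

/-- State-action value function `Q_π(s, a)`. -/
def Qval (P : Kernel (S × A) S) (π : ℕ → Kernel S A) (γ : ℝ) (R : S × A → ℝ)
    (sa : S × A) : ℝ :=
  ∑' i : ℕ, γ ^ i * ∫ x, R x ∂(saLawFrom P π (Measure.dirac sa) i)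

/-- State value function `V_π(s)`. -/
def Vval (P : Kernel (S × A) S) (π : ℕ → Kernel S A) (γ : ℝ) (R : S × A → ℝ)
    (s : S) : ℝ :=
  retJ P π (Measure.dirac s) γ R

/-- Discounted state occupancy measure `μ_π = (1-γ) ∑ γ^i μ_{π,i}`. -/
def stateOcc (P : Kernel (S × A) S) (π : ℕ → Kernel S A) (μ0 : Measure S) (γ : ℝ) :
    Measure S :=
  ENNReal.ofReal (1 - γ) •
    Measure.sum fun i => ENNReal.ofReal (γ ^ i) • (saLaw P π μ0 i).map Prod.fst


/-- Discounted state-action occupancy starting from a state-action measure `d` and then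
following the stationary policy `κ`: `d_{d,κ} = (1-γ) ∑_{i≥0} γ^i P_κ^i d`. -/
def saOccFrom (P : Kernel (S × A) S) (κ : Kernel S A) (γ : ℝ) (d : Measure (S × A)) :
    Measure (S × A) :=
  ENNReal.ofReal (1 - γ) •
    Measure.sum fun i => ENNReal.ofReal (γ ^ i) • (mdpStep P κ)^[i] d

/-- Discounted state-action occupancy `d_π = (1-γ) ∑_{i≥0} γ^i d_{π,i}` of a
(possibly non-stationary) policy `π` started at `μ0`. -/
def saOcc (P : Kernel (S × A) S) (π : ℕ → Kernel S A) (μ0 : Measure S) (γ : ℝ) :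
    Measure (S × A) :=
  ENNReal.ofReal (1 - γ) •
    Measure.sum fun i => ENNReal.ofReal (γ ^ i) • saLaw P π μ0 i

/-!
Running `π*_e` for `i` steps from the step-`j` law of `π^θ` gives the step-`(j + i)` law of the
policy that follows `π^θ` up to step `j` and `π*_e` afterwards. Since `π*_e` is optimal from
every state, switching to it never lowers the return, so this policy is again `ε`-near-optimal
and its laws are covered by `C · d^D`. The occupancy `d_{d_c, π*_e}` is an average of such laws,
over the geometric step `i`, the mixing parameter `θ` and the geometric step `j`.
-/

open scoped ENNReal

lemma MeasureTheory.Measure.bind_apply_le_of_forall_le {α β : Type*} [MeasurableSpace α]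
    [MeasurableSpace β] {μ : Measure α} [IsProbabilityMeasure μ] {f : α → Measure β}
    {B : Set β} (hB : MeasurableSet B) {c : ℝ≥0∞} (h : ∀ a, f a B ≤ c) : μ.bind f B ≤ c :=
  (Measure.bind_apply_le f hB).trans (lintegral_le_const (ae_of_all _ h))

section Discounting

variable {γ : ℝ}

def discountMeasure (γ : ℝ) : Measure ℕ :=
  ENNReal.ofReal (1 - γ) • Measure.sum fun i => ENNReal.ofReal (γ ^ i) • Measure.dirac i

lemma isProbabilityMeasure_discountMeasure (hγ₀ : 0 ≤ γ) (hγ₁ : γ < 1) :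
    IsProbabilityMeasure (discountMeasure γ) := by
  constructor
  simp only [discountMeasure, Measure.smul_apply, Measure.sum_apply _ MeasurableSet.univ,
    measure_univ, smul_eq_mul, mul_one]
  simp_rw [ENNReal.ofReal_pow hγ₀, ENNReal.tsum_geometric, ENNReal.ofReal_sub 1 hγ₀,
    ENNReal.ofReal_one]
  exact ENNReal.mul_inv_cancel (tsub_pos_of_lt (ENNReal.ofReal_lt_one.2 hγ₁)).ne' (by finiteness)

lemma discountMeasure_bind {X : Type*} [MeasurableSpace X] (ν : ℕ → Measure X) :
    (discountMeasure γ).bind ν =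
      ENNReal.ofReal (1 - γ) • Measure.sum fun i => ENNReal.ofReal (γ ^ i) • ν i := by
  rw [discountMeasure, Measure.bind_smul,
    Measure.bind_sum _ _ (measurable_of_countable ν).aemeasurable]
  simp_rw [Measure.bind_smul, Measure.dirac_bind (measurable_of_countable ν)]

lemma saOcc_eq_bind (P : Kernel (S × A) S) (π : ℕ → Kernel S A) (μ : Measure S) :
    saOcc P π μ γ = (discountMeasure γ).bind (saLaw P π μ) :=
  (discountMeasure_bind _).symm

lemma saOccFrom_eq_bind (P : Kernel (S × A) S) (κ : Kernel S A) (d : Measure (S × A)) :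
    saOccFrom P κ γ d = (discountMeasure γ).bind fun i => (mdpStep P κ)^[i] d :=
  (discountMeasure_bind _).symm

end Discounting

section Kernels

variable {P : Kernel (S × A) S} {κ : Kernel S A}

lemma mdpInit_eq_comp [IsSFiniteKernel κ] (μ : Measure S) :
    mdpInit κ μ = (Kernel.id ×ₖ κ) ∘ₘ μ := by
  refine congrArg μ.bind (funext fun s => ?_)
  rw [Kernel.prod_apply, Kernel.id_apply, Measure.dirac_prod]

lemma mdpStep_eq_mdpInit [IsSFiniteKernel κ] (ρ : Measure (S × A)) :
    mdpStep P κ ρ = mdpInit κ (P ∘ₘ ρ) := by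
  rw [mdpInit_eq_comp, Measure.comp_assoc]
  refine congrArg ρ.bind (funext fun sa => ?_)
  rw [Kernel.comp_apply, ← mdpInit_eq_comp]
  rfl

lemma mdpStep_eq_comp [IsSFiniteKernel κ] (ρ : Measure (S × A)) :
    mdpStep P κ ρ = ((Kernel.id ×ₖ κ) ∘ₖ P) ∘ₘ ρ := by
  rw [mdpStep_eq_mdpInit, mdpInit_eq_comp, Measure.comp_assoc]

lemma measurable_mdpStep [IsSFiniteKernel κ] : Measurable (mdpStep P κ) := by
  simp_rw [funext mdpStep_eq_comp]
  exact Measure.measurable_bind' (Kernel.measurable _)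

lemma mdpStep_bind [IsSFiniteKernel κ] {α : Type*} [MeasurableSpace α] {μ : Measure α}
    {f : α → Measure (S × A)} (hf : AEMeasurable f μ) :
    mdpStep P κ (μ.bind f) = μ.bind fun a => mdpStep P κ (f a) := by
  simp_rw [mdpStep_eq_comp]
  exact Measure.bind_bind hf (Kernel.aemeasurable _)

lemma iterate_mdpStep_bind [IsSFiniteKernel κ] {α : Type*} [MeasurableSpace α] {μ : Measure α}
    {f : α → Measure (S × A)} (hf : AEMeasurable f μ) (i : ℕ) :
    (mdpStep P κ)^[i] (μ.bind f) = μ.bind fun a => (mdpStep P κ)^[i] (f a) := by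
  induction i with
  | zero => rfl
  | succ i ih =>
    simp only [Function.iterate_succ_apply', ih]
    exact mdpStep_bind ((measurable_mdpStep.iterate i).comp_aemeasurable hf)

instance [IsMarkovKernel κ] (μ : Measure S) [IsProbabilityMeasure μ] :
    IsProbabilityMeasure (mdpInit κ μ) := by
  rw [mdpInit_eq_comp]; infer_instance

instance [IsMarkovKernel P] [IsMarkovKernel κ] (ρ : Measure (S × A)) [IsProbabilityMeasure ρ] :
    IsProbabilityMeasure (mdpStep P κ ρ) := by
  rw [mdpStep_eq_comp]; infer_instance

end Kernels

section Trajectories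

variable {P : Kernel (S × A) S} {σ σ' : ℕ → Kernel S A}

lemma measurable_saLawFrom [∀ k, IsSFiniteKernel (σ k)] (i : ℕ) :
    Measurable fun ρ => saLawFrom P σ ρ i := by
  induction i with
  | zero => exact measurable_id
  | succ i ih => exact measurable_mdpStep.comp ih

lemma saLawFrom_bind [∀ k, IsSFiniteKernel (σ k)] {α : Type*} [MeasurableSpace α]
    {μ : Measure α} {f : α → Measure (S × A)} (hf : AEMeasurable f μ) (i : ℕ) :
    saLawFrom P σ (μ.bind f) i = μ.bind fun a => saLawFrom P σ (f a) i := by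
  induction i with
  | zero => rfl
  | succ i ih =>
    rw [saLawFrom, ih]
    exact mdpStep_bind ((measurable_saLawFrom i).comp_aemeasurable hf)

instance [IsMarkovKernel P] [∀ k, IsMarkovKernel (σ k)] (ρ : Measure (S × A))
    [IsProbabilityMeasure ρ] (i : ℕ) : IsProbabilityMeasure (saLawFrom P σ ρ i) := by
  induction i with
  | zero => assumption
  | succ i ih => rw [saLawFrom]; infer_instance

lemma saLawFrom_congr (h : ∀ k, σ (k + 1) = σ' (k + 1)) (ρ : Measure (S × A)) (i : ℕ) :
    saLawFrom P σ ρ i = saLawFrom P σ' ρ i := by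
  induction i with
  | zero => rfl
  | succ i ih => rw [saLawFrom, saLawFrom, ih, h]

lemma saLawFrom_succ (ρ : Measure (S × A)) (i : ℕ) :
    saLawFrom P σ ρ (i + 1) = saLawFrom P (fun k => σ (k + 1)) (mdpStep P (σ 1) ρ) i := by
  induction i with
  | zero => rfl
  | succ i ih => rw [saLawFrom, ih]; rfl

lemma saLaw_eq_saLawFrom (μ : Measure S) (i : ℕ) :
    saLaw P σ μ i = saLawFrom P σ (mdpInit (σ 0) μ) i := by
  induction i with
  | zero => rfl
  | succ i ih => rw [saLaw, saLawFrom, ih]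

lemma saLaw_congr (μ : Measure S) {i : ℕ} (h : ∀ k ≤ i, σ k = σ' k) :
    saLaw P σ μ i = saLaw P σ' μ i := by
  induction i with
  | zero => rw [saLaw, saLaw, h 0 le_rfl]
  | succ i ih => rw [saLaw, saLaw, ih fun k hk => h k (by omega), h (i + 1) le_rfl]

end Trajectories

section Returns

variable (P : Kernel (S × A) S) (γ : ℝ) (R : S × A → ℝ)

/-- `σ 0` is never used: the first action is already drawn by `ρ`. -/
def eReturnFrom (σ : ℕ → Kernel S A) (ρ : Measure (S × A)) : ℝ≥0∞ :=
  ∑' i, ENNReal.ofReal γ ^ i * ∫⁻ sa, ENNReal.ofReal (R sa) ∂(saLawFrom P σ ρ i)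

def eRetJ (τ : ℕ → Kernel S A) (μ : Measure S) : ℝ≥0∞ :=
  eReturnFrom P γ R τ (mdpInit (τ 0) μ)

variable {P γ R} {σ σ' : ℕ → Kernel S A}

lemma eReturnFrom_congr (h : ∀ k, σ (k + 1) = σ' (k + 1)) (ρ : Measure (S × A)) :
    eReturnFrom P γ R σ ρ = eReturnFrom P γ R σ' ρ := by
  simp_rw [eReturnFrom, saLawFrom_congr h]

lemma eReturnFrom_eq_add_eRetJ [IsSFiniteKernel (σ 1)] (ρ : Measure (S × A)) :
    eReturnFrom P γ R σ ρ = ∫⁻ sa, ENNReal.ofReal (R sa) ∂ρ +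
      ENNReal.ofReal γ * eRetJ P γ R (fun k => σ (k + 1)) (P ∘ₘ ρ) := by
  rw [eReturnFrom, eRetJ, eReturnFrom, ← mdpStep_eq_mdpInit, ← ENNReal.tsum_mul_left,
    tsum_eq_zero_add' ENNReal.summable, pow_zero, one_mul]
  congr 2 with i
  rw [saLawFrom_succ, pow_succ, mul_comm _ (ENNReal.ofReal γ), mul_assoc]

lemma eReturnFrom_bind [∀ k, IsSFiniteKernel (σ k)] (hR : Measurable R) {α : Type*}
    [MeasurableSpace α] {μ : Measure α} {f : α → Measure (S × A)} (hf : AEMeasurable f μ) :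
    eReturnFrom P γ R σ (μ.bind f) = ∫⁻ a, eReturnFrom P γ R σ (f a) ∂μ := by
  have hlaw (i : ℕ) : AEMeasurable (fun a => saLawFrom P σ (f a) i) μ :=
    (measurable_saLawFrom i).comp_aemeasurable hf
  have hterm (i : ℕ) : AEMeasurable (fun a =>
      ENNReal.ofReal γ ^ i * ∫⁻ sa, ENNReal.ofReal (R sa) ∂(saLawFrom P σ (f a) i)) μ :=
    ((Measure.measurable_lintegral hR.ennreal_ofReal).comp_aemeasurable (hlaw i)).const_mul _
  unfold eReturnFrom
  rw [lintegral_tsum hterm]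
  refine tsum_congr fun i => ?_
  rw [saLawFrom_bind hf, Measure.lintegral_bind (hlaw i) hR.ennreal_ofReal.aemeasurable,
    lintegral_const_mul' _ _ (by finiteness)]

lemma eRetJ_eq_lintegral_dirac [∀ k, IsSFiniteKernel (σ k)] (hR : Measurable R)
    (μ : Measure S) : eRetJ P γ R σ μ = ∫⁻ s, eRetJ P γ R σ (Measure.dirac s) ∂μ := by
  simp_rw [eRetJ, mdpInit_eq_comp, Measure.dirac_bind (Kernel.measurable _)]
  exact eReturnFrom_bind hR (Kernel.aemeasurable _)

variable {Rmax : ℝ}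

lemma eReturnFrom_le [IsMarkovKernel P] [∀ k, IsMarkovKernel (σ k)] (hR : ∀ sa, R sa ≤ Rmax)
    (hγ₀ : 0 ≤ γ) (hγ₁ : γ < 1) (ρ : Measure (S × A)) [IsProbabilityMeasure ρ] :
    eReturnFrom P γ R σ ρ ≤ ENNReal.ofReal (Rmax / (1 - γ)) := by
  calc eReturnFrom P γ R σ ρ
      ≤ ∑' i, ENNReal.ofReal γ ^ i * ENNReal.ofReal Rmax :=
        ENNReal.tsum_le_tsum fun i => by
          gcongr
          exact lintegral_le_const (ae_of_all _ fun sa => ENNReal.ofReal_le_ofReal (hR sa))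
    _ = ENNReal.ofReal (Rmax / (1 - γ)) := by
        rw [ENNReal.tsum_mul_right, ENNReal.tsum_geometric, mul_comm, div_eq_mul_inv,
          ENNReal.ofReal_mul' (inv_nonneg.2 (sub_nonneg.2 hγ₁.le)),
          ENNReal.ofReal_inv_of_pos (sub_pos.2 hγ₁), ENNReal.ofReal_sub _ hγ₀, ENNReal.ofReal_one]

lemma eReturnFrom_lt_top [IsMarkovKernel P] [∀ k, IsMarkovKernel (σ k)]
    (hR : ∀ sa, R sa ≤ Rmax) (hγ₀ : 0 ≤ γ) (hγ₁ : γ < 1) (ρ : Measure (S × A))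
    [IsProbabilityMeasure ρ] : eReturnFrom P γ R σ ρ < ⊤ :=
  (eReturnFrom_le hR hγ₀ hγ₁ ρ).trans_lt ENNReal.ofReal_lt_top

lemma retJ_eq_toReal_eRetJ [IsMarkovKernel P] [∀ k, IsMarkovKernel (σ k)]
    (hRm : Measurable R) (hR : ∀ sa, R sa ∈ Set.Icc 0 Rmax) (hγ : 0 ≤ γ)
    (μ : Measure S) [IsProbabilityMeasure μ] :
    retJ P σ μ γ R = (eRetJ P γ R σ μ).toReal := by
  have hterm (i : ℕ) : ENNReal.ofReal γ ^ i *
      ∫⁻ sa, ENNReal.ofReal (R sa) ∂(saLawFrom P σ (mdpInit (σ 0) μ) i) ≠ ⊤ :=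
    ENNReal.mul_ne_top (ENNReal.pow_ne_top ENNReal.ofReal_ne_top) <|
      ((lintegral_le_const (ae_of_all _ fun sa => ENNReal.ofReal_le_ofReal (hR sa).2)).trans_lt
        ENNReal.ofReal_lt_top).ne
  rw [eRetJ, eReturnFrom, ENNReal.tsum_toReal_eq hterm, retJ]
  refine tsum_congr fun i => ?_
  rw [ENNReal.toReal_mul, ENNReal.toReal_pow, ENNReal.toReal_ofReal hγ, saLaw_eq_saLawFrom,
    integral_eq_lintegral_of_nonneg_ae (ae_of_all _ fun sa => (hR sa).1)
      hRm.aestronglyMeasurable]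

end Returns

section Optimality

variable (P : Kernel (S × A) S) (γ : ℝ) (R : S × A → ℝ)

def IsOptimal (κ : Kernel S A) : Prop :=
  ∀ τ : ℕ → Kernel S A, (∀ k, IsMarkovKernel (τ k)) → ∀ s,
    eRetJ P γ R τ (Measure.dirac s) ≤ eRetJ P γ R (fun _ => κ) (Measure.dirac s)

def switchAfter (σ : ℕ → Kernel S A) (n : ℕ) (κ : Kernel S A) : ℕ → Kernel S A :=
  fun k => if k ≤ n then σ k else κ

variable {P γ R} {σ : ℕ → Kernel S A} {κ : Kernel S A} {Rmax : ℝ}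

instance [∀ k, IsMarkovKernel (σ k)] [IsMarkovKernel κ] (n k : ℕ) :
    IsMarkovKernel (switchAfter σ n κ k) := by
  unfold switchAfter; split <;> infer_instance

lemma switchAfter_zero (n : ℕ) : switchAfter σ n κ 0 = σ 0 := if_pos n.zero_le

lemma switchAfter_succ (n : ℕ) :
    (fun k => switchAfter σ (n + 1) κ (k + 1)) = switchAfter (fun k => σ (k + 1)) n κ :=
  funext fun _ => if_congr (by omega) rfl rfl

lemma isOptimal_of_Vval_eq_iSup [IsMarkovKernel P] [IsMarkovKernel κ] (hRm : Measurable R)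
    (hR : ∀ sa, R sa ∈ Set.Icc 0 Rmax) (hγ₀ : 0 ≤ γ) (hγ₁ : γ < 1)
    (hopt : ∀ s, Vval P (fun _ => κ) γ R s =
      ⨆ π : {π : ℕ → Kernel S A // ∀ i, IsMarkovKernel (π i)}, Vval P π.1 γ R s) :
    IsOptimal P γ R κ := by
  intro τ hτ s
  have hVval (π : ℕ → Kernel S A) (hπ : ∀ k, IsMarkovKernel (π k)) :
      Vval P π γ R s = (eRetJ P γ R π (Measure.dirac s)).toReal :=
    retJ_eq_toReal_eRetJ hRm hR hγ₀ _
  have hlt (π : ℕ → Kernel S A) (hπ : ∀ k, IsMarkovKernel (π k)) :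
      eRetJ P γ R π (Measure.dirac s) < ⊤ :=
    eReturnFrom_lt_top (fun sa => (hR sa).2) hγ₀ hγ₁ _
  have hbdd : BddAbove (Set.range fun π : {π : ℕ → Kernel S A // ∀ i, IsMarkovKernel (π i)} =>
      Vval P π.1 γ R s) := by
    refine ⟨(ENNReal.ofReal (Rmax / (1 - γ))).toReal, ?_⟩
    rintro _ ⟨⟨π, hπ⟩, rfl⟩
    show Vval P π γ R s ≤ _
    rw [hVval π hπ]
    exact ENNReal.toReal_mono ENNReal.ofReal_ne_top
      (eReturnFrom_le (fun sa => (hR sa).2) hγ₀ hγ₁ _)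
  have hle := le_ciSup hbdd ⟨τ, hτ⟩
  rw [← hopt, hVval τ hτ, hVval _ fun _ => inferInstance] at hle
  exact (ENNReal.toReal_le_toReal (hlt τ hτ).ne (hlt _ fun _ => inferInstance).ne).1 hle

lemma eRetJ_le_of_isOptimal (hopt : IsOptimal P γ R κ) [IsMarkovKernel κ]
    [∀ k, IsMarkovKernel (σ k)] (hRm : Measurable R) (μ : Measure S) :
    eRetJ P γ R σ μ ≤ eRetJ P γ R (fun _ => κ) μ := by
  rw [eRetJ_eq_lintegral_dirac hRm, eRetJ_eq_lintegral_dirac hRm]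
  exact lintegral_mono (hopt σ inferInstance)

lemma eReturnFrom_le_of_isOptimal (hopt : IsOptimal P γ R κ) [IsMarkovKernel κ]
    [∀ k, IsMarkovKernel (σ k)] (hRm : Measurable R) (ρ : Measure (S × A)) :
    eReturnFrom P γ R σ ρ ≤ eReturnFrom P γ R (fun _ => κ) ρ := by
  rw [eReturnFrom_eq_add_eRetJ, eReturnFrom_eq_add_eRetJ]
  gcongr
  exact eRetJ_le_of_isOptimal hopt hRm _

lemma eReturnFrom_le_switchAfter (hopt : IsOptimal P γ R κ) [IsMarkovKernel κ]
    [∀ k, IsMarkovKernel (σ k)] (hRm : Measurable R) (n : ℕ) (ρ : Measure (S × A)) :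
    eReturnFrom P γ R σ ρ ≤ eReturnFrom P γ R (switchAfter σ n κ) ρ := by
  induction n generalizing σ ρ with
  | zero =>
    rw [eReturnFrom_congr (σ := switchAfter σ 0 κ) (σ' := fun _ => κ)
      fun k => if_neg (Nat.not_succ_le_zero k)]
    exact eReturnFrom_le_of_isOptimal hopt hRm ρ
  | succ n ih =>
    rw [eReturnFrom_eq_add_eRetJ, eReturnFrom_eq_add_eRetJ, switchAfter_succ]
    gcongr
    rw [eRetJ, eRetJ, switchAfter_zero]
    exact ih _

lemma retJ_le_retJ_switchAfter (hopt : IsOptimal P γ R κ) [IsMarkovKernel P] [IsMarkovKernel κ]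
    [∀ k, IsMarkovKernel (σ k)] (hRm : Measurable R) (hR : ∀ sa, R sa ∈ Set.Icc 0 Rmax)
    (hγ₀ : 0 ≤ γ) (hγ₁ : γ < 1) (n : ℕ) (μ : Measure S) [IsProbabilityMeasure μ] :
    retJ P σ μ γ R ≤ retJ P (switchAfter σ n κ) μ γ R := by
  rw [retJ_eq_toReal_eRetJ hRm hR hγ₀, retJ_eq_toReal_eRetJ hRm hR hγ₀, eRetJ, eRetJ,
    switchAfter_zero]
  exact ENNReal.toReal_mono (eReturnFrom_lt_top (fun sa => (hR sa).2) hγ₀ hγ₁ _).ne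
    (eReturnFrom_le_switchAfter hopt hRm n _)

lemma iterate_mdpStep_saLaw (π : ℕ → Kernel S A) (μ : Measure S) (j i : ℕ) :
    (mdpStep P κ)^[i] (saLaw P π μ j) = saLaw P (switchAfter π j κ) μ (j + i) := by
  induction i with
  | zero => exact saLaw_congr μ fun k hk => (if_pos hk).symm
  | succ i ih =>
    rw [Function.iterate_succ_apply', ih, ← add_assoc, saLaw]
    congr 1
    exact (if_neg (by omega)).symm

end Optimality

theorem mixture_occupancy_covered_general
    (P : Kernel (S × A) S) [IsMarkovKernel P]
    (πe : Kernel S A) [IsMarkovKernel πe]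
    (μ0 : Measure S) [IsProbabilityMeasure μ0]
    (γ : ℝ) (hγ : γ ∈ Set.Ioo (0 : ℝ) 1)
    (Rmax : ℝ) (R : S × A → ℝ) (hRmeas : Measurable R)
    (hRrange : ∀ sa, R sa ∈ Set.Icc 0 Rmax)
    -- `π*_e` is optimal almost everywhere (over all non-stationary policies)
    (hopt : ∀ s : S, Vval P (fun _ => πe) γ R s =
      ⨆ π : {π : ℕ → Kernel S A // ∀ i, IsMarkovKernel (π i)}, Vval P π.1 γ R s)
    -- constants and the data distribution
    (ε C : ℝ)
    (dD : Measure (S × A))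
    -- every per-step law of every non-stationary `ε`-near-optimal policy is covered by `d^D`
    (hcover : ∀ π : ℕ → Kernel S A, (∀ i, IsMarkovKernel (π i)) →
      retJ P (fun _ => πe) μ0 γ R - retJ P π μ0 γ R ≤ ε →
      ∀ (i : ℕ) (B : Set (S × A)), MeasurableSet B →
        saLaw P π μ0 i B ≤ ENNReal.ofReal C * dD B)
    -- the mixing probability space and the mixed family of near-optimal policies
    (Θ : Type*) [MeasurableSpace Θ] (lam : Measure Θ) [IsProbabilityMeasure lam]
    (πθ : Θ → ℕ → Kernel S A) (hMk : ∀ θ i, IsMarkovKernel (πθ θ i))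
    (hnear : ∀ θ, retJ P (fun _ => πe) μ0 γ R - retJ P (πθ θ) μ0 γ R ≤ ε)
    (hmeas : ∀ B : Set (S × A), MeasurableSet B →
      Measurable fun θ => saOcc P (πθ θ) μ0 γ B)
    -- the mixture distribution `d_c(B) = ∫ d_{π^θ}(B) dλ(θ)`
    (dc : Measure (S × A))
    (hdc : ∀ B : Set (S × A), MeasurableSet B →
      dc B = ∫⁻ θ, saOcc P (πθ θ) μ0 γ B ∂lam) :
    ∀ B : Set (S × A), MeasurableSet B →
      saOccFrom P πe γ dc B ≤ ENNReal.ofReal C * dD B := by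
  intro B hB
  obtain ⟨hγ₀, hγ₁⟩ := hγ
  have hoptimal : IsOptimal P γ R πe :=
    isOptimal_of_Vval_eq_iSup hRmeas hRrange hγ₀.le hγ₁ hopt
  have hocc : Measurable fun θ => saOcc P (πθ θ) μ0 γ :=
    Measure.measurable_of_measurable_coe _ hmeas
  have hdc_bind : dc = lam.bind fun θ => saOcc P (πθ θ) μ0 γ :=
    Measure.ext fun B hB => by rw [hdc B hB, Measure.bind_apply hB hocc.aemeasurable]
  have := isProbabilityMeasure_discountMeasure hγ₀.le hγ₁
  rw [saOccFrom_eq_bind]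
  refine Measure.bind_apply_le_of_forall_le hB fun i => ?_
  rw [hdc_bind, iterate_mdpStep_bind hocc.aemeasurable]
  refine Measure.bind_apply_le_of_forall_le hB fun θ => ?_
  have := hMk θ
  rw [saOcc_eq_bind, iterate_mdpStep_bind (measurable_of_countable _).aemeasurable]
  refine Measure.bind_apply_le_of_forall_le hB fun j => ?_
  rw [iterate_mdpStep_saLaw]
  refine hcover _ inferInstance ?_ _ B hB
  linarith [hnear θ, retJ_le_retJ_switchAfter (σ := πθ θ) hoptimal hRmeas hRrange hγ₀.le hγ₁ j μ0]

/-- a mixture `d_c` of occupancies of near-optimal policies, whose per-step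
laws are all covered by `d^D`, satisfies `d_{d_c, π*_e} ≤ C · d^D`. -/
theorem mixture_occupancy_covered
    (P : Kernel (S × A) S) [IsMarkovKernel P]
    (πe : Kernel S A) [IsMarkovKernel πe]
    (μ0 : Measure S) [IsProbabilityMeasure μ0]
    (γ : ℝ) (hγ : γ ∈ Set.Ioo (0 : ℝ) 1)
    (Rmax : ℝ) (R : S × A → ℝ) (hRmeas : Measurable R)
    (hRrange : ∀ sa, R sa ∈ Set.Icc 0 Rmax)
    -- `π*_e` is optimal almost everywhere (over all non-stationary policies)
    (hopt : ∀ s : S, Vval P (fun _ => πe) γ R s =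
      ⨆ π : {π : ℕ → Kernel S A // ∀ i, IsMarkovKernel (π i)}, Vval P π.1 γ R s)
    -- Bellman optimality equation for `Q* = Q_{π*_e}`
    (hBellman : ∀ sa : S × A, Qval P (fun _ => πe) γ R sa =
      R sa + γ * ∫ s', (⨆ a', Qval P (fun _ => πe) γ R (s', a')) ∂(P sa))
    (hVsup : ∀ s : S, Vval P (fun _ => πe) γ R s = ⨆ a, Qval P (fun _ => πe) γ R (s, a))
    (hVpi : ∀ s : S, Vval P (fun _ => πe) γ R s = ∫ a, Qval P (fun _ => πe) γ R (s, a) ∂(πe s))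
    -- constants and the data distribution
    (ε C : ℝ) (hε : 0 ≤ ε) (hC : 0 < C)
    (dD : Measure (S × A)) [IsProbabilityMeasure dD]
    -- every per-step law of every non-stationary `ε`-near-optimal policy is covered by `d^D`
    (hcover : ∀ π : ℕ → Kernel S A, (∀ i, IsMarkovKernel (π i)) →
      retJ P (fun _ => πe) μ0 γ R - retJ P π μ0 γ R ≤ ε →
      ∀ (i : ℕ) (B : Set (S × A)), MeasurableSet B →
        saLaw P π μ0 i B ≤ ENNReal.ofReal C * dD B)
    -- the mixing probability space and the mixed family of near-optimal policies
    (Θ : Type*) [MeasurableSpace Θ] (lam : Measure Θ) [IsProbabilityMeasure lam]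
    (πθ : Θ → ℕ → Kernel S A) (hMk : ∀ θ i, IsMarkovKernel (πθ θ i))
    (hnear : ∀ θ, retJ P (fun _ => πe) μ0 γ R - retJ P (πθ θ) μ0 γ R ≤ ε)
    (hmeas : ∀ B : Set (S × A), MeasurableSet B →
      Measurable fun θ => saOcc P (πθ θ) μ0 γ B)
    -- the mixture distribution `d_c(B) = ∫ d_{π^θ}(B) dλ(θ)`
    (dc : Measure (S × A))
    (hdc : ∀ B : Set (S × A), MeasurableSet B →
      dc B = ∫⁻ θ, saOcc P (πθ θ) μ0 γ B ∂lam) :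
    ∀ B : Set (S × A), MeasurableSet B →
      saOccFrom P πe γ dc B ≤ ENNReal.ofReal C * dD B :=
  mixture_occupancy_covered_general P πe μ0 γ hγ Rmax R hRmeas hRrange hopt ε C dD hcover Θ lam πθ
    hMk hnear hmeas dc hdc
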